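/- Let T > 0, a > 0, let k⁰⁰, k¹¹, k²² > 0 be kernel constants, let σ : [0,T] → ℝ be right-continuous with left limits, with at most finitely many discontinuity points and σ̲ ≤ σ(u) ≤ σ̄ for constants 0 < σ̲ ≤ σ̄, and let α : [0,T] → ℝ be continuous with α(u) > 0 for all u. For each integer B ≥ 1, with Δ_B = T/B, 𝖳_i = i·T/B, ρ_i = ρ_{𝖳_{i−1},𝖳_i} and R_i = (∫₀^T α(s)^{−1} ds) / (∫_{𝖳_{i−1}}^{𝖳_i} α(s)^{−1} ds), define AVAR_B^{(RK,rob)} = Σ_{i=1}^B R_i^{1/2} · a·(Δ_B·∫_{𝖳_{i−1}}^{𝖳_i} σ(u)⁴ du)^{3/4}·g(ρ_i). Then AVAR_B^{(RK,rob)} → (g(1)/8) · ( 8·a·(∫₀^T α(s)^{−1} ds)^{1/2} · ∫₀^T α(s)^{1/2}·σ(s)³ ds ) as B → ∞. -/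

import Mathlib

open MeasureTheory Filter

/-- Heteroskedasticity measure `ρ_{r,s}`. -/
noncomputable def rhoM (σ : ℝ → ℝ) (r s : ℝ) : ℝ :=
  (∫ u in r..s, σ u ^ 2) /
    ((s - r) ^ ((1 : ℝ) / 2) * (∫ u in r..s, σ u ^ 4) ^ ((1 : ℝ) / 2))

/-- `p(ρ) = (1 + (1 + 3d/ρ²)^{1/2})^{1/2}` with `d = k⁰⁰k²²/(k¹¹)²`. -/
noncomputable def pKer (k00 k11 k22 ρ : ℝ) : ℝ :=
  (1 + (1 + 3 * (k00 * k22 / k11 ^ 2) / ρ ^ 2) ^ ((1 : ℝ) / 2)) ^ ((1 : ℝ) / 2)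

/-- `g(ρ) = (16/3)(ρ k⁰⁰ k¹¹)^{1/2}(1/p(ρ) + p(ρ))`. -/
noncomputable def gKer (k00 k11 k22 ρ : ℝ) : ℝ :=
  (16 / 3) * (ρ * k00 * k11) ^ ((1 : ℝ) / 2) *
    (1 / pKer k00 k11 k22 ρ + pKer k00 k11 k22 ρ)

lemma one_le_rpow_half {x : ℝ} (hx : 1 ≤ x) : 1 ≤ x ^ ((1:ℝ)/2) := by
  calc (1:ℝ) = 1 ^ ((1:ℝ)/2) := (Real.one_rpow _).symm
  _ ≤ x ^ ((1:ℝ)/2) := Real.rpow_le_rpow zero_le_one hx (by norm_num)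

lemma one_le_pKer (k00 k11 k22 ρ : ℝ) (h : 0 ≤ 3 * (k00 * k22 / k11 ^ 2) / ρ ^ 2) :
    1 ≤ pKer k00 k11 k22 ρ := by
  have h2 : (1:ℝ) ≤ (1 + 3 * (k00 * k22 / k11 ^ 2) / ρ ^ 2) ^ ((1:ℝ)/2) :=
    one_le_rpow_half (by linarith)
  exact one_le_rpow_half (by linarith)

lemma pKer_continuousAt (k00 k11 k22 : ℝ) {ρ : ℝ} (hρ : ρ ≠ 0) :
    ContinuousAt (pKer k00 k11 k22) ρ := by
  unfold pKer
  apply ContinuousAt.rpow_const _ (Or.inr (by norm_num))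
  apply ContinuousAt.add continuousAt_const
  apply ContinuousAt.rpow_const _ (Or.inr (by norm_num))
  exact continuousAt_const.add
    (continuousAt_const.div (continuousAt_id.pow 2) (pow_ne_zero 2 hρ))

lemma gKer_continuousAt (k00 k11 k22 : ℝ) (hk : 0 ≤ k00 * k22) {ρ : ℝ} (hρ : ρ ≠ 0) :
    ContinuousAt (gKer k00 k11 k22) ρ := by
  have hd : 0 ≤ 3 * (k00 * k22 / k11 ^ 2) / ρ ^ 2 := by positivity
  have hpne : pKer k00 k11 k22 ρ ≠ 0 :=
    ne_of_gt (lt_of_lt_of_le one_pos (one_le_pKer k00 k11 k22 ρ hd))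
  have hpc := pKer_continuousAt k00 k11 k22 hρ
  unfold gKer
  exact (continuousAt_const.mul
    (((continuousAt_id.mul continuousAt_const).mul continuousAt_const).rpow_const
      (Or.inr (by norm_num)))).mul
    ((continuousAt_const.div hpc hpne).add hpc)
open MeasureTheory Filter

noncomputable def Phi (a I k00 k11 k22 : ℝ) (x : ℝ × ℝ × ℝ) : ℝ :=
  a * I ^ ((1:ℝ)/2) * x.2.2 ^ (-(1/2) : ℝ) * x.2.1 ^ ((3:ℝ)/4) *
    gKer k00 k11 k22 (x.1 / x.2.1 ^ ((1:ℝ)/2))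

lemma Phi_continuousAt (a I k00 k11 k22 : ℝ) (hk : 0 ≤ k00 * k22) {x : ℝ × ℝ × ℝ}
    (h1 : 0 < x.1) (h2 : 0 < x.2.1) (h3 : 0 < x.2.2) :
    ContinuousAt (Phi a I k00 k11 k22) x := by
  have c1 : ContinuousAt (fun y : ℝ × ℝ × ℝ => y.1) x := continuousAt_fst
  have c21 : ContinuousAt (fun y : ℝ × ℝ × ℝ => y.2.1) x :=
    (continuous_fst.comp continuous_snd).continuousAt
  have c22 : ContinuousAt (fun y : ℝ × ℝ × ℝ => y.2.2) x :=
    (continuous_snd.comp continuous_snd).continuousAt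
  have hq : ContinuousAt (fun y : ℝ × ℝ × ℝ => y.1 / y.2.1 ^ ((1:ℝ)/2)) x :=
    c1.div (c21.rpow_const (Or.inr (by norm_num)))
      (ne_of_gt (Real.rpow_pos_of_pos h2 _))
  have hρ : (0:ℝ) < x.1 / x.2.1 ^ ((1:ℝ)/2) :=
    div_pos h1 (Real.rpow_pos_of_pos h2 _)
  have hg : ContinuousAt (gKer k00 k11 k22 ∘ fun y : ℝ × ℝ × ℝ => y.1 / y.2.1 ^ ((1:ℝ)/2)) x :=
    ContinuousAt.comp (gKer_continuousAt k00 k11 k22 hk hρ.ne') hq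
  exact (((continuousAt_const.mul (c22.rpow_const (Or.inl h3.ne'))).mul
    (c21.rpow_const (Or.inl h2.ne'))).mul hg)

lemma phi_eq (a I k00 k11 k22 Δ J2 J4 Jα : ℝ) (hI : 0 ≤ I) (hΔ : 0 < Δ)
    (hJ2 : 0 < J2) (hJ4 : 0 < J4) (hJα : 0 < Jα) :
    Δ⁻¹ * ((I / Jα) ^ ((1:ℝ)/2) * (a * (Δ * J4) ^ ((3:ℝ)/4) *
      gKer k00 k11 k22 (J2 / (Δ ^ ((1:ℝ)/2) * J4 ^ ((1:ℝ)/2))))) =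
    Phi a I k00 k11 k22 (Δ⁻¹ * J2, Δ⁻¹ * J4, Δ⁻¹ * Jα) := by
  have hΔne : Δ ≠ 0 := hΔ.ne'
  have h12 : (0:ℝ) < Δ ^ ((1:ℝ)/2) := Real.rpow_pos_of_pos hΔ _
  have h34 : (0:ℝ) < Δ ^ ((3:ℝ)/4) := Real.rpow_pos_of_pos hΔ _
  have hJ4h : (0:ℝ) < J4 ^ ((1:ℝ)/2) := Real.rpow_pos_of_pos hJ4 _
  have hJαh : (0:ℝ) < Jα ^ ((1:ℝ)/2) := Real.rpow_pos_of_pos hJα _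
  have hhalf : Δ ^ ((1:ℝ)/2) * Δ ^ ((1:ℝ)/2) = Δ := by
    rw [← Real.rpow_add hΔ]; norm_num
  have hkey : Δ ^ ((3:ℝ)/4) * Δ ^ ((3:ℝ)/4) = Δ * Δ ^ ((1:ℝ)/2) := by
    rw [← Real.rpow_add hΔ, show (3:ℝ)/4 + 3/4 = 1 + 1/2 by norm_num,
      Real.rpow_add hΔ, Real.rpow_one]
  have harg : (Δ⁻¹ * J2) / (Δ⁻¹ * J4) ^ ((1:ℝ)/2) = J2 / (Δ ^ ((1:ℝ)/2) * J4 ^ ((1:ℝ)/2)) := by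
    rw [Real.mul_rpow (inv_nonneg.mpr hΔ.le) hJ4.le, Real.inv_rpow hΔ.le]
    rw [div_eq_div_iff (by positivity) (by positivity)]
    field_simp
    linear_combination hhalf
  simp only [Phi]
  rw [harg]
  set G := gKer k00 k11 k22 (J2 / (Δ ^ ((1:ℝ)/2) * J4 ^ ((1:ℝ)/2))) with hG
  rw [Real.div_rpow hI hJα.le, Real.mul_rpow hΔ.le hJ4.le,
    Real.mul_rpow (inv_nonneg.mpr hΔ.le) hJ4.le, Real.inv_rpow hΔ.le,
    Real.rpow_neg (by positivity), Real.mul_rpow (inv_nonneg.mpr hΔ.le) hJα.le,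
    Real.inv_rpow hΔ.le]
  field_simp
  linear_combination (I ^ ((1:ℝ)/2) * a * G) * hkey
lemma floor_block (T : ℝ) (hT : 0 < T) (u : ℝ) (hu0 : 0 < u) (huT : u < T)
    (B : ℕ) (hB : 1 ≤ B) :
    0 ≤ (⌊u * B / T⌋ : ℝ) * T / B ∧ ((⌊u * B / T⌋ : ℝ) + 1) * T / B ≤ T ∧
      (⌊u * B / T⌋ : ℝ) * T / B ≤ u ∧ u < ((⌊u * B / T⌋ : ℝ) + 1) * T / B := by
  have hBpos : (0:ℝ) < B := by exact_mod_cast hB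
  have hn0 : (0:ℝ) ≤ (⌊u * B / T⌋ : ℝ) := by
    exact_mod_cast Int.floor_nonneg.mpr (by positivity)
  have hfl : (⌊u * B / T⌋ : ℝ) ≤ u * B / T := Int.floor_le _
  have hfl2 : u * B / T < (⌊u * B / T⌋ : ℝ) + 1 := Int.lt_floor_add_one _
  have hnB : (⌊u * B / T⌋ : ℝ) + 1 ≤ B := by
    have : ⌊u * B / T⌋ < (B : ℤ) := by
      rw [Int.floor_lt]
      push_cast
      rw [div_lt_iff₀ hT]
      nlinarith
    have h' : ⌊u * B / T⌋ + 1 ≤ (B : ℤ) := this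
    exact_mod_cast h'
  refine ⟨by positivity, ?_, ?_, ?_⟩
  · calc ((⌊u * B / T⌋ : ℝ) + 1) * T / B ≤ (B : ℝ) * T / B := by gcongr
    _ = T := by field_simp
  · calc (⌊u * B / T⌋ : ℝ) * T / B ≤ (u * B / T) * T / B := by gcongr
    _ = u := by field_simp
  · calc u = (u * B / T) * T / B := by field_simp
    _ < ((⌊u * B / T⌋ : ℝ) + 1) * T / B := by gcongr

lemma avg_tendsto (T : ℝ) (hT : 0 < T) (f : ℝ → ℝ) (u : ℝ) (hu0 : 0 < u) (huT : u < T)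
    (hint : ∀ r s : ℝ, 0 ≤ r → s ≤ T → r ≤ s → IntervalIntegrable f MeasureTheory.volume r s)
    (hc : ContinuousAt f u) :
    Filter.Tendsto (fun B : ℕ => (T / B)⁻¹ *
      ∫ x in ((⌊u * B / T⌋ : ℝ) * T / B)..(((⌊u * B / T⌋ : ℝ) + 1) * T / B), f x)
      Filter.atTop (nhds (f u)) := by
  rw [Metric.tendsto_atTop]
  intro ε hε
  obtain ⟨δ, hδ, hδf⟩ := Metric.continuousAt_iff.mp hc (ε/2) (by linarith)
  refine ⟨⌈T/δ⌉₊ + 1, fun B hB => ?_⟩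
  have hB1 : 1 ≤ B := le_trans (Nat.le_add_left 1 _) hB
  have hBpos : (0:ℝ) < B := by exact_mod_cast hB1
  have hΔ : (0:ℝ) < T / B := by positivity
  have hΔδ : T / B < δ := by
    rw [div_lt_iff₀ hBpos]
    have h1 : T / δ ≤ (⌈T/δ⌉₊ : ℝ) := Nat.le_ceil _
    have h2 : ((⌈T/δ⌉₊ + 1 : ℕ) : ℝ) ≤ (B : ℝ) := by exact_mod_cast hB
    push_cast at h2
    have h3 : T / δ < (B : ℝ) := by linarith
    rw [div_lt_iff₀ hδ] at h3
    linarith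
  obtain ⟨hr0, hsT, hru, hus⟩ := floor_block T hT u hu0 huT B hB1
  set r := (⌊u * B / T⌋ : ℝ) * T / B with hrdef
  set s := ((⌊u * B / T⌋ : ℝ) + 1) * T / B with hsdef
  have hsr : s - r = T / B := by rw [hrdef, hsdef]; ring
  have hrs : r ≤ s := by linarith
  have hint' := hint r s hr0 hsT hrs
  have hsub : (∫ x in r..s, f x) - (T / B) * f u = ∫ x in r..s, (f x - f u) := by
    rw [intervalIntegral.integral_sub hint' intervalIntegrable_const,
      intervalIntegral.integral_const, smul_eq_mul, hsr]
  have hbound : ‖∫ x in r..s, (f x - f u)‖ ≤ (ε/2) * |s - r| := by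
    apply intervalIntegral.norm_integral_le_of_norm_le_const
    intro x hx
    rw [Real.norm_eq_abs, ← Real.dist_eq]
    rw [Set.uIoc_of_le hrs] at hx
    have hxd : dist x u < δ := by
      rw [Real.dist_eq, abs_lt]
      constructor
      · have : u < s := hus
        have : r > u - T/B := by linarith
        have : x > u - T/B := lt_of_lt_of_le this hx.1.le
        linarith
      · have : x ≤ s := hx.2
        have : s ≤ u + T/B := by linarith
        linarith
    exact le_of_lt (hδf hxd)
  rw [Real.dist_eq]
  have heq : (T / B)⁻¹ * (∫ x in r..s, f x) - f u
      = (T / B)⁻¹ * ((∫ x in r..s, f x) - (T / B) * f u) := by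
    rw [mul_sub, ← mul_assoc, inv_mul_cancel₀ hΔ.ne', one_mul]
  rw [heq, hsub]
  rw [abs_mul, abs_of_pos (inv_pos.mpr hΔ)]
  rw [Real.norm_eq_abs] at hbound
  calc (T / B)⁻¹ * |∫ x in r..s, (f x - f u)| ≤ (T / B)⁻¹ * ((ε/2) * |s - r|) := by
        apply mul_le_mul_of_nonneg_left hbound (inv_nonneg.mpr hΔ.le)
  _ = ε/2 := by rw [hsr, abs_of_pos hΔ]; field_simp
  _ < ε := by linarith
noncomputable def trmD (T a k00 k11 k22 : ℝ) (σ α : ℝ → ℝ) (B : ℕ) (x : ℝ) : ℝ :=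
  ((∫ s in (0:ℝ)..T, (α s)⁻¹) /
      (∫ s in (x * T / B)..((x + 1) * T / B), (α s)⁻¹)) ^ ((1 : ℝ) / 2) *
    (a * ((T / B) * ∫ u in (x * T / B)..((x + 1) * T / B), σ u ^ 4) ^ ((3 : ℝ) / 4) *
      gKer k00 k11 k22 (rhoM σ (x * T / B) ((x + 1) * T / B)))

noncomputable def phiD (T a k00 k11 k22 : ℝ) (σ α : ℝ → ℝ) (B : ℕ) (u : ℝ) : ℝ :=
  (T / B)⁻¹ * trmD T a k00 k11 k22 σ α B ((⌊u * B / T⌋ : ℤ) : ℝ)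

/-- Convergence of the local RK asymptotic variance under stochastic sampling
times with intensity `α` (no-jump case): the limit is `g(1)/8` times the
efficiency bound `8a(∫₀^T α⁻¹)^{1/2}∫₀^T α^{1/2}σ³`. -/
theorem stmt13 (T a σlo σhi k00 k11 k22 : ℝ) (hT : 0 < T) (ha : 0 < a)
    (h00 : 0 < k00) (h11 : 0 < k11) (h22 : 0 < k22)
    (hσlo : 0 < σlo) (hσ : σlo ≤ σhi) (σ α : ℝ → ℝ)
    (hrc : ∀ u ∈ Set.Ico (0 : ℝ) T, ContinuousWithinAt σ (Set.Ici u) u)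
    (hll : ∀ u ∈ Set.Ioc (0 : ℝ) T,
      ∃ L : ℝ, Tendsto σ (nhdsWithin u (Set.Iio u)) (nhds L))
    (hfin : {u ∈ Set.Icc (0 : ℝ) T |
      ¬ ContinuousWithinAt σ (Set.Icc (0 : ℝ) T) u}.Finite)
    (hbd : ∀ u ∈ Set.Icc (0 : ℝ) T, σlo ≤ σ u ∧ σ u ≤ σhi)
    (hα : ContinuousOn α (Set.Icc 0 T))
    (hαpos : ∀ u ∈ Set.Icc (0 : ℝ) T, 0 < α u) :
    Tendsto (fun B : ℕ => ∑ i ∈ Finset.range B,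
        ((∫ s in (0:ℝ)..T, (α s)⁻¹) /
            (∫ s in ((i : ℝ) * T / B)..(((i : ℝ) + 1) * T / B), (α s)⁻¹)) ^ ((1 : ℝ) / 2) *
          (a * ((T / B) *
              ∫ u in ((i : ℝ) * T / B)..(((i : ℝ) + 1) * T / B), σ u ^ 4) ^ ((3 : ℝ) / 4) *
            gKer k00 k11 k22 (rhoM σ ((i : ℝ) * T / B) (((i : ℝ) + 1) * T / B))))
      atTop
      (nhds (gKer k00 k11 k22 1 / 8 *
        (8 * a * (∫ s in (0:ℝ)..T, (α s)⁻¹) ^ ((1 : ℝ) / 2) *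
          ∫ s in (0:ℝ)..T, (α s) ^ ((1 : ℝ) / 2) * σ s ^ 3))) := by
  have hT0 : (0:ℝ) ≤ T := hT.le
  have hkk : 0 ≤ k00 * k22 := by positivity
  obtain ⟨xM, hxM, hxMmax⟩ := isCompact_Icc.exists_isMaxOn
    ⟨0, Set.left_mem_Icc.mpr hT0⟩ hα
  obtain ⟨xm, hxm, hxmmin⟩ := isCompact_Icc.exists_isMinOn
    ⟨0, Set.left_mem_Icc.mpr hT0⟩ hα
  have hαmax : ∀ v ∈ Set.Icc (0:ℝ) T, α v ≤ α xM := fun v hv => hxMmax hv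
  have hαmin : ∀ v ∈ Set.Icc (0:ℝ) T, α xm ≤ α v := fun v hv => hxmmin hv
  have hαmaxpos : 0 < α xM := hαpos xM hxM
  have hαminpos : 0 < α xm := hαpos xm hxm
  -- measurability of σ
  have hFnull : volume {u ∈ Set.Icc (0 : ℝ) T |
      ¬ ContinuousWithinAt σ (Set.Icc (0 : ℝ) T) u} = 0 := hfin.measure_zero _
  have hmeasσ : AEMeasurable σ (volume.restrict (Set.Icc 0 T)) := by
    have hcont : ContinuousOn σ (Set.Icc (0:ℝ) T \ {u ∈ Set.Icc (0 : ℝ) T |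
        ¬ ContinuousWithinAt σ (Set.Icc (0 : ℝ) T) u}) := by
      intro v hv
      have h1 : ContinuousWithinAt σ (Set.Icc (0:ℝ) T) v := by
        by_contra hcc
        exact hv.2 ⟨hv.1, hcc⟩
      exact h1.mono Set.diff_subset
    have h2 := hcont.aemeasurable (μ := volume) (measurableSet_Icc.diff hfin.measurableSet)
    have h3 : Set.Icc (0:ℝ) T \ {u ∈ Set.Icc (0 : ℝ) T |
        ¬ ContinuousWithinAt σ (Set.Icc (0 : ℝ) T) u} =ᵐ[volume] Set.Icc (0:ℝ) T :=
      MeasureTheory.diff_ae_eq_self.mpr (measure_mono_null Set.inter_subset_right hFnull)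
    exact h2.mono_measure (Measure.restrict_congr_set h3).ge
  -- integrability of powers of σ
  have hintσ : ∀ (k : ℕ) (r s : ℝ), 0 ≤ r → s ≤ T → r ≤ s →
      IntervalIntegrable (fun u => σ u ^ k) volume r s := by
    intro k r s hr hs hrs
    rw [intervalIntegrable_iff_integrableOn_Ioc_of_le hrs]
    have hsub : Set.Ioc r s ⊆ Set.Icc (0:ℝ) T :=
      fun x hx => ⟨le_trans hr hx.1.le, le_trans hx.2 hs⟩
    have hm : AEMeasurable (fun u => σ u ^ k) (volume.restrict (Set.Ioc r s)) :=
      (hmeasσ.mono_measure (Measure.restrict_mono hsub le_rfl)).pow_const k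
    refine Integrable.mono' (g := fun _ => σhi ^ k)
      (integrableOn_const measure_Ioc_lt_top.ne) hm.aestronglyMeasurable ?_
    filter_upwards [ae_restrict_mem measurableSet_Ioc] with x hx
    have hb := hbd x (hsub hx)
    have habs : |σ x| ≤ σhi := abs_le.mpr ⟨by linarith, hb.2⟩
    calc ‖σ x ^ k‖ = |σ x| ^ k := by rw [Real.norm_eq_abs, abs_pow]
    _ ≤ σhi ^ k := pow_le_pow_left₀ (abs_nonneg _) habs k
  have hcontαinv : ContinuousOn (fun v => (α v)⁻¹) (Set.Icc 0 T) :=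
    hα.inv₀ (fun x hx => (hαpos x hx).ne')
  have hintα : ∀ r s : ℝ, 0 ≤ r → s ≤ T → r ≤ s →
      IntervalIntegrable (fun v => (α v)⁻¹) volume r s := by
    intro r s hr hs hrs
    apply (hcontαinv.mono ?_).intervalIntegrable
    rw [Set.uIcc_of_le hrs]
    exact fun x hx => ⟨le_trans hr hx.1, le_trans hx.2 hs⟩
  have hIpos : 0 < ∫ s in (0:ℝ)..T, (α s)⁻¹ :=
    intervalIntegral.intervalIntegral_pos_of_pos_on (hintα 0 T le_rfl le_rfl hT0)
      (fun x hx => inv_pos.mpr (hαpos x ⟨hx.1.le, hx.2.le⟩)) hT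
  -- block integral bounds
  have hblk : ∀ r s : ℝ, 0 ≤ r → s ≤ T → r ≤ s →
      ((s - r) * σlo ^ 2 ≤ (∫ u in r..s, σ u ^ 2) ∧ (∫ u in r..s, σ u ^ 2) ≤ (s - r) * σhi ^ 2) ∧
      ((s - r) * σlo ^ 4 ≤ (∫ u in r..s, σ u ^ 4) ∧ (∫ u in r..s, σ u ^ 4) ≤ (s - r) * σhi ^ 4) ∧
      ((s - r) * (α xM)⁻¹ ≤ (∫ x in r..s, (α x)⁻¹) ∧
        (∫ x in r..s, (α x)⁻¹) ≤ (s - r) * (α xm)⁻¹) := by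
    intro r s hr hs hrs
    have hsub : Set.Icc r s ⊆ Set.Icc (0:ℝ) T := Set.Icc_subset_Icc hr hs
    refine ⟨⟨?_, ?_⟩, ⟨?_, ?_⟩, ?_, ?_⟩
    · calc (s - r) * σlo ^ 2 = ∫ _ in r..s, σlo ^ 2 := by
            rw [intervalIntegral.integral_const, smul_eq_mul]
      _ ≤ _ := intervalIntegral.integral_mono_on hrs intervalIntegrable_const
            (hintσ 2 r s hr hs hrs)
            (fun x hx => pow_le_pow_left₀ hσlo.le (hbd x (hsub hx)).1 2)
    · calc (∫ u in r..s, σ u ^ 2) ≤ ∫ _ in r..s, σhi ^ 2 :=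
            intervalIntegral.integral_mono_on hrs (hintσ 2 r s hr hs hrs)
              intervalIntegrable_const
              (fun x hx => pow_le_pow_left₀ (le_trans hσlo.le (hbd x (hsub hx)).1)
                (hbd x (hsub hx)).2 2)
      _ = (s - r) * σhi ^ 2 := by rw [intervalIntegral.integral_const, smul_eq_mul]
    · calc (s - r) * σlo ^ 4 = ∫ _ in r..s, σlo ^ 4 := by
            rw [intervalIntegral.integral_const, smul_eq_mul]
      _ ≤ _ := intervalIntegral.integral_mono_on hrs intervalIntegrable_const
            (hintσ 4 r s hr hs hrs)
            (fun x hx => pow_le_pow_left₀ hσlo.le (hbd x (hsub hx)).1 4)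
    · calc (∫ u in r..s, σ u ^ 4) ≤ ∫ _ in r..s, σhi ^ 4 :=
            intervalIntegral.integral_mono_on hrs (hintσ 4 r s hr hs hrs)
              intervalIntegrable_const
              (fun x hx => pow_le_pow_left₀ (le_trans hσlo.le (hbd x (hsub hx)).1)
                (hbd x (hsub hx)).2 4)
      _ = (s - r) * σhi ^ 4 := by rw [intervalIntegral.integral_const, smul_eq_mul]
    · calc (s - r) * (α xM)⁻¹ = ∫ _ in r..s, (α xM)⁻¹ := by
            rw [intervalIntegral.integral_const, smul_eq_mul]
      _ ≤ _ := intervalIntegral.integral_mono_on hrs intervalIntegrable_const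
            (hintα r s hr hs hrs)
            (fun x hx => inv_anti₀ (hαpos x (hsub hx)) (hαmax x (hsub hx)))
    · calc (∫ x in r..s, (α x)⁻¹) ≤ ∫ _ in r..s, (α xm)⁻¹ :=
            intervalIntegral.integral_mono_on hrs (hintα r s hr hs hrs)
              intervalIntegrable_const
              (fun x hx => inv_anti₀ hαminpos (hαmin x (hsub hx)))
      _ = (s - r) * (α xm)⁻¹ := by rw [intervalIntegral.integral_const, smul_eq_mul]
  -- compact box bound for Phi
  have hΦcont : ContinuousOn (Phi a (∫ s in (0:ℝ)..T, (α s)⁻¹) k00 k11 k22)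
      (Set.Icc (σlo^2, σlo^4, (α xM)⁻¹) (σhi^2, σhi^4, (α xm)⁻¹)) := by
    intro x hx
    simp only [Set.mem_Icc, Prod.le_def] at hx
    obtain ⟨⟨g1, g2, g3⟩, -⟩ := hx
    exact (Phi_continuousAt a _ k00 k11 k22 hkk
      (lt_of_lt_of_le (by positivity) g1)
      (lt_of_lt_of_le (by positivity) g2)
      (lt_of_lt_of_le (by positivity) g3)).continuousWithinAt
  obtain ⟨M, hM⟩ := isCompact_Icc.exists_bound_of_continuousOn hΦcont
  -- the key per-block identity and box membership
  have hstep : ∀ B : ℕ, 1 ≤ B → ∀ x : ℝ, 0 ≤ x * T / B → (x + 1) * T / B ≤ T →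
      (T / B)⁻¹ * trmD T a k00 k11 k22 σ α B x =
        Phi a (∫ s in (0:ℝ)..T, (α s)⁻¹) k00 k11 k22
          ((T/B)⁻¹ * ∫ u in (x*T/B)..((x+1)*T/B), σ u ^ 2,
           (T/B)⁻¹ * ∫ u in (x*T/B)..((x+1)*T/B), σ u ^ 4,
           (T/B)⁻¹ * ∫ t in (x*T/B)..((x+1)*T/B), (α t)⁻¹) ∧
        ((T/B)⁻¹ * ∫ u in (x*T/B)..((x+1)*T/B), σ u ^ 2,
         (T/B)⁻¹ * ∫ u in (x*T/B)..((x+1)*T/B), σ u ^ 4,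
         (T/B)⁻¹ * ∫ t in (x*T/B)..((x+1)*T/B), (α t)⁻¹) ∈
          Set.Icc ((σlo^2 : ℝ), σlo^4, (α xM)⁻¹) (σhi^2, σhi^4, (α xm)⁻¹) := by
    intro B hB x hr hs
    have hBpos : (0:ℝ) < B := by exact_mod_cast hB
    have hΔ : (0:ℝ) < T / B := by positivity
    have hsr : (x + 1) * T / B - x * T / B = T / B := by ring
    have hrs : x * T / B ≤ (x + 1) * T / B := by linarith
    obtain ⟨⟨h2l, h2u⟩, ⟨h4l, h4u⟩, hal, hau⟩ := hblk _ _ hr hs hrs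
    rw [hsr] at h2l h2u h4l h4u hal hau
    have hJ2 : 0 < ∫ u in (x*T/B)..((x+1)*T/B), σ u ^ 2 :=
      lt_of_lt_of_le (by positivity) h2l
    have hJ4 : 0 < ∫ u in (x*T/B)..((x+1)*T/B), σ u ^ 4 :=
      lt_of_lt_of_le (by positivity) h4l
    have hJα : 0 < ∫ t in (x*T/B)..((x+1)*T/B), (α t)⁻¹ :=
      lt_of_lt_of_le (by positivity) hal
    have hscale : ∀ c J : ℝ, T/B * c ≤ J → c ≤ (T/B)⁻¹ * J := by
      intro c J hcJ
      have := mul_le_mul_of_nonneg_left hcJ (inv_nonneg.mpr hΔ.le)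
      rwa [← mul_assoc, inv_mul_cancel₀ hΔ.ne', one_mul] at this
    have hscale' : ∀ c J : ℝ, J ≤ T/B * c → (T/B)⁻¹ * J ≤ c := by
      intro c J hcJ
      have := mul_le_mul_of_nonneg_left hcJ (inv_nonneg.mpr hΔ.le)
      rwa [← mul_assoc, inv_mul_cancel₀ hΔ.ne', one_mul] at this
    constructor
    · have hrhoM : rhoM σ (x*T/B) ((x+1)*T/B) =
          (∫ u in (x*T/B)..((x+1)*T/B), σ u ^ 2) /
            ((T/B) ^ ((1:ℝ)/2) * (∫ u in (x*T/B)..((x+1)*T/B), σ u ^ 4) ^ ((1:ℝ)/2)) := by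
        simp only [rhoM, hsr]
      simp only [trmD]
      rw [hrhoM]
      exact phi_eq a (∫ s in (0:ℝ)..T, (α s)⁻¹) k00 k11 k22 (T/B) _ _ _
        hIpos.le hΔ hJ2 hJ4 hJα
    · simp only [Set.mem_Icc, Prod.le_def]
      exact ⟨⟨hscale _ _ h2l, hscale _ _ h4l, hscale _ _ hal⟩,
        ⟨hscale' _ _ h2u, hscale' _ _ h4u, hscale' _ _ hau⟩⟩
  -- sum equals integral of the step function
  have hsum : ∀ B : ℕ, 1 ≤ B →
      (∑ i ∈ Finset.range B, trmD T a k00 k11 k22 σ α B (i:ℝ)) =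
        ∫ x in (0:ℝ)..T, phiD T a k00 k11 k22 σ α B x := by
    intro B hB
    have hBpos : (0:ℝ) < B := by exact_mod_cast hB
    have hΔ : (0:ℝ) < T / B := by positivity
    have hrs : ∀ i : ℕ, (i:ℝ)*T/B ≤ ((i:ℝ)+1)*T/B := by
      intro i
      have e : ((i:ℝ)+1)*T/B - (i:ℝ)*T/B = T/B := by ring
      linarith
    have hblocki : ∀ i : ℕ,
        (∀ᵐ x : ℝ ∂volume, x ∈ Set.uIoc ((i:ℝ)*T/B) (((i:ℝ)+1)*T/B) →
          phiD T a k00 k11 k22 σ α B x = (T/B)⁻¹ * trmD T a k00 k11 k22 σ α B (i:ℝ)) := by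
      intro i
      filter_upwards [compl_mem_ae_iff.mpr (measure_singleton (((i:ℝ)+1)*T/B))]
        with x hxne hxmem
      rw [Set.uIoc_of_le (hrs i)] at hxmem
      have hfl : ⌊x * B / T⌋ = (i:ℤ) := by
        rw [Int.floor_eq_iff]
        have hx1 : (i:ℝ)*T/B < x := hxmem.1
        have hx2 : x < ((i:ℝ)+1)*T/B := lt_of_le_of_ne hxmem.2 hxne
        constructor
        · push_cast
          rw [le_div_iff₀ hT]
          rw [div_lt_iff₀ hBpos] at hx1
          linarith
        · push_cast
          rw [div_lt_iff₀ hT]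
          rw [lt_div_iff₀ hBpos] at hx2
          linarith
      simp only [phiD, hfl]
      norm_cast
    have hint_i : ∀ i : ℕ, IntervalIntegrable (phiD T a k00 k11 k22 σ α B) volume
        ((i:ℝ)*T/B) (((i:ℝ)+1)*T/B) := by
      intro i
      rw [intervalIntegrable_iff_integrableOn_Ioc_of_le (hrs i)]
      apply IntegrableOn.congr_fun_ae
        (f := fun _ : ℝ => (T/B)⁻¹ * trmD T a k00 k11 k22 σ α B (i:ℝ))
        (integrableOn_const measure_Ioc_lt_top.ne)
      filter_upwards [ae_restrict_of_ae (hblocki i), ae_restrict_mem measurableSet_Ioc]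
        with x hx hxm
      exact (hx (by rw [Set.uIoc_of_le (hrs i)]; exact hxm)).symm
    have hval : ∀ i : ℕ,
        (∫ x in ((i:ℝ)*T/B)..(((i:ℝ)+1)*T/B), phiD T a k00 k11 k22 σ α B x)
          = trmD T a k00 k11 k22 σ α B (i:ℝ) := by
      intro i
      rw [intervalIntegral.integral_congr_ae (hblocki i), intervalIntegral.integral_const,
        smul_eq_mul, show ((i:ℝ)+1)*T/B - (i:ℝ)*T/B = T/B by ring,
        ← mul_assoc, mul_inv_cancel₀ hΔ.ne', one_mul]
    have hcast : ∀ k : ℕ, ((k+1:ℕ):ℝ) = (k:ℝ)+1 := fun k => by push_cast; ring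
    have hadj := intervalIntegral.sum_integral_adjacent_intervals
      (a := fun k : ℕ => (k:ℝ)*T/B) (μ := volume)
      (f := phiD T a k00 k11 k22 σ α B) (n := B)
      (fun k _ => by rw [hcast k]; exact hint_i k)
    calc (∑ i ∈ Finset.range B, trmD T a k00 k11 k22 σ α B (i:ℝ))
        = ∑ i ∈ Finset.range B,
            ∫ x in ((i:ℝ)*T/B)..((((i+1):ℕ):ℝ)*T/B), phiD T a k00 k11 k22 σ α B x := by
          refine Finset.sum_congr rfl (fun i _ => ?_)
          rw [hcast i]
          exact (hval i).symm
    _ = ∫ x in (((0:ℕ):ℝ)*T/B)..(((B:ℕ):ℝ)*T/B), phiD T a k00 k11 k22 σ α B x := hadj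
    _ = ∫ x in (0:ℝ)..T, phiD T a k00 k11 k22 σ α B x := by
          rw [show ((0:ℕ):ℝ)*T/(B:ℝ) = 0 by norm_num,
            show ((B:ℕ):ℝ)*T/(B:ℝ) = T by field_simp]
  -- measurability of the step functions
  have hmeasφ : ∀ B : ℕ, AEStronglyMeasurable (phiD T a k00 k11 k22 σ α B)
      (volume.restrict (Set.uIoc 0 T)) := by
    intro B
    apply Measurable.aestronglyMeasurable
    have hcomp : phiD T a k00 k11 k22 σ α B =
        (fun n : ℤ => (T/B)⁻¹ * trmD T a k00 k11 k22 σ α B (n:ℝ)) ∘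
          (fun u : ℝ => ⌊u * B / T⌋) := rfl
    rw [hcomp]
    have hm1 : Measurable fun n : ℤ => (T/B)⁻¹ * trmD T a k00 k11 k22 σ α B (n:ℝ) :=
      fun _ _ => trivial
    have hm2 : Measurable fun u : ℝ => ⌊u * (B:ℝ) / T⌋ :=
      Int.measurable_floor.comp ((measurable_id.mul_const _).div_const _)
    exact hm1.comp hm2
  -- uniform bound
  have hbound : ∀ᶠ B in atTop, ∀ᵐ x : ℝ ∂volume, x ∈ Set.uIoc 0 T →
      ‖phiD T a k00 k11 k22 σ α B x‖ ≤ M := by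
    filter_upwards [eventually_ge_atTop 1] with B hB
    filter_upwards [compl_mem_ae_iff.mpr (measure_singleton T)] with x hxT hxmem
    rw [Set.uIoc_of_le hT0] at hxmem
    have hx0 : 0 < x := hxmem.1
    have hxT' : x < T := lt_of_le_of_ne hxmem.2 hxT
    obtain ⟨hr0, hsT, -, -⟩ := floor_block T hT x hx0 hxT' B hB
    obtain ⟨heq, hmem⟩ := hstep B hB ((⌊x * B / T⌋ : ℤ):ℝ) hr0 hsT
    rw [show phiD T a k00 k11 k22 σ α B x =
      (T/B)⁻¹ * trmD T a k00 k11 k22 σ α B ((⌊x * B / T⌋:ℤ):ℝ) from rfl, heq]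
    exact hM _ hmem
  -- pointwise limit
  have hlimit : ∀ᵐ x : ℝ ∂volume, x ∈ Set.uIoc 0 T →
      Tendsto (fun B => phiD T a k00 k11 k22 σ α B x) atTop
        (nhds (Phi a (∫ s in (0:ℝ)..T, (α s)⁻¹) k00 k11 k22
          (σ x ^ 2, σ x ^ 4, (α x)⁻¹))) := by
    filter_upwards [compl_mem_ae_iff.mpr (measure_singleton T),
      compl_mem_ae_iff.mpr hFnull] with x hxT hxF hxmem
    rw [Set.uIoc_of_le hT0] at hxmem
    have hx0 : 0 < x := hxmem.1
    have hxT' : x < T := lt_of_le_of_ne hxmem.2 hxT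
    have hcw : ContinuousWithinAt σ (Set.Icc (0:ℝ) T) x := by
      by_contra hcc
      exact hxF ⟨⟨hx0.le, hxmem.2⟩, hcc⟩
    have hmem_nhds : Set.Icc (0:ℝ) T ∈ nhds x := Icc_mem_nhds hx0 hxT'
    have hcσ : ContinuousAt σ x := hcw.continuousAt hmem_nhds
    have hcα : ContinuousAt α x := hα.continuousAt hmem_nhds
    have hσx : 0 < σ x := lt_of_lt_of_le hσlo (hbd x ⟨hx0.le, hxT'.le⟩).1
    have hαx : 0 < α x := hαpos x ⟨hx0.le, hxT'.le⟩
    have t2 := avg_tendsto T hT (fun v => σ v ^ 2) x hx0 hxT' (hintσ 2) (hcσ.pow 2)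
    have t4 := avg_tendsto T hT (fun v => σ v ^ 4) x hx0 hxT' (hintσ 4) (hcσ.pow 4)
    have tα := avg_tendsto T hT (fun v => (α v)⁻¹) x hx0 hxT' hintα (hcα.inv₀ hαx.ne')
    have tprod := t2.prodMk_nhds (t4.prodMk_nhds tα)
    have hΦat := Phi_continuousAt a (∫ s in (0:ℝ)..T, (α s)⁻¹) k00 k11 k22 hkk
      (x := (σ x^2, σ x^4, (α x)⁻¹)) (pow_pos hσx 2) (pow_pos hσx 4) (inv_pos.mpr hαx)
    have hcomp := hΦat.tendsto.comp tprod
    apply hcomp.congr'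
    filter_upwards [eventually_ge_atTop 1] with B hB
    obtain ⟨hr0, hsT, -, -⟩ := floor_block T hT x hx0 hxT' B hB
    obtain ⟨heq, -⟩ := hstep B hB ((⌊x * B / T⌋:ℤ):ℝ) hr0 hsT
    simp only [Function.comp_apply]
    exact heq.symm
  -- dominated convergence
  have hDCT := intervalIntegral.tendsto_integral_filter_of_dominated_convergence
    (μ := volume) (a := 0) (b := T) (F := fun B => phiD T a k00 k11 k22 σ α B)
    (f := fun x => Phi a (∫ s in (0:ℝ)..T, (α s)⁻¹) k00 k11 k22
      (σ x ^ 2, σ x ^ 4, (α x)⁻¹))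
    (fun _ => M) (Eventually.of_forall hmeasφ) hbound intervalIntegrable_const hlimit
  -- identify the limit integral
  have hlim_eq : (∫ x in (0:ℝ)..T, Phi a (∫ s in (0:ℝ)..T, (α s)⁻¹) k00 k11 k22
        (σ x ^ 2, σ x ^ 4, (α x)⁻¹))
      = gKer k00 k11 k22 1 / 8 *
        (8 * a * (∫ s in (0:ℝ)..T, (α s)⁻¹) ^ ((1 : ℝ) / 2) *
          ∫ s in (0:ℝ)..T, (α s) ^ ((1 : ℝ) / 2) * σ s ^ 3) := by
    have hcong : ∀ x ∈ Set.uIcc (0:ℝ) T,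
        Phi a (∫ s in (0:ℝ)..T, (α s)⁻¹) k00 k11 k22 (σ x ^ 2, σ x ^ 4, (α x)⁻¹)
          = (a * (∫ s in (0:ℝ)..T, (α s)⁻¹) ^ ((1:ℝ)/2) * gKer k00 k11 k22 1) *
              ((α x) ^ ((1:ℝ)/2) * σ x ^ 3) := by
      intro x hx
      rw [Set.uIcc_of_le hT0] at hx
      have hσx : 0 < σ x := lt_of_lt_of_le hσlo (hbd x hx).1
      have hαx : 0 < α x := hαpos x hx
      have e1 : ((α x)⁻¹ : ℝ) ^ (-(1/2) : ℝ) = (α x) ^ ((1:ℝ)/2) := by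
        rw [Real.inv_rpow hαx.le, Real.rpow_neg hαx.le, inv_inv]
      have e2 : ((σ x ^ 4 : ℝ)) ^ ((3:ℝ)/4) = σ x ^ 3 := by
        rw [← Real.rpow_natCast (σ x) 4, ← Real.rpow_mul hσx.le,
          show ((4:ℕ):ℝ) * ((3:ℝ)/4) = ((3:ℕ):ℝ) by norm_num, Real.rpow_natCast]
      have e3 : ((σ x ^ 4 : ℝ)) ^ ((1:ℝ)/2) = σ x ^ 2 := by
        rw [← Real.rpow_natCast (σ x) 4, ← Real.rpow_mul hσx.le,
          show ((4:ℕ):ℝ) * ((1:ℝ)/2) = ((2:ℕ):ℝ) by norm_num, Real.rpow_natCast]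
      simp only [Phi]
      rw [e1, e2, e3, div_self (pow_ne_zero 2 hσx.ne')]
      ring
    rw [intervalIntegral.integral_congr hcong, intervalIntegral.integral_const_mul]
    ring
  rw [hlim_eq] at hDCT
  refine hDCT.congr' ?_
  filter_upwards [eventually_ge_atTop 1] with B hB
  exact (hsum B hB).symm
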